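/- arXiv:2011.08358 — 4 statements merged into one kernel-verified Lean document; each statement's English description precedes it below -/
import Mathlib

section
/- Let s ≤ r be tuples of positive reals and set w(m) := max{ p^{−(t_1 m_1 + ⋯ + t_n m_n)/(p−1)} : t ∈ {s_1,r_1}×⋯×{s_n,r_n} } for m ∈ ℤ^n. Then every element F of the completion Π_{[s,r]} has a unique expansion F = Σ_{m∈ℤ^n} a_m T^m as a series converging in Π_{[s,r]}, where (a_m)_{m∈ℤ^n} is a family in ℚ_p such that |a_m|_p · w(m) tends to 0 along the filter of cofinite subsets of ℤ^n; moreover ‖F‖_{[s,r]} = sup_m |a_m|_p · w(m). In other words, Π_{[s,r]} is isometrically ℚ_p-linearly isomorphic to the weighted c₀-space of ℤ^n-indexed families of p-adic numbers with weight w, the monomials T^m forming an orthogonal topological basis. -/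
/-!
On Laurent polynomials the interval norm is the weighted sup norm `sup_m |a_m| w(m)`: exchange
the maximum over the corners with the supremum over `m`. Hence the coefficient map `f ↦ a_m` is
bounded by `1 / w(m)` and extends to a continuous functional `c_m` on the completion, with
`|c_m(F)| w(m) ≤ ‖F‖`. The function `F ↦ sup_m |c_m(F)| w(m)` is 1-Lipschitz and agrees with the
norm on the dense subspace, so it is the norm. Applied to `F` minus a partial sum of
`Σ c_m(F) T^m`, this bounds the error by the tail `sup_{m ∉ t} |c_m(F)| w(m)`, which is small
since `|c_m(F)| w(m) → 0` (approximate `F` by a polynomial). Applying `c_m` to any convergent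
expansion recovers its coefficients, which gives uniqueness.
-/

open scoped BigOperators

/-- The weight `p^{-(t₁m₁+⋯+tₙmₙ)/(p-1)}` of the monomial `T^m` for the Gauss norm. -/
noncomputable def gaussWeight (p : ℕ) {n : ℕ} (t : Fin n → ℝ) (m : Fin n → ℤ) : ℝ :=
  (p : ℝ) ^ (-(∑ α, t α * (m α : ℝ)) / ((p : ℝ) - 1))

/-- The Gauss norm `‖Σ aₘ Tᵐ‖_t` on the Laurent polynomial ring
`ℚ_p[T₁^{±1},…,Tₙ^{±1}]`, realized as the monoid algebra of `ℤⁿ` over `ℚ_p`. -/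
noncomputable def gaussNorm (p : ℕ) [Fact p.Prime] {n : ℕ} (t : Fin n → ℝ)
    (f : AddMonoidAlgebra ℚ_[p] (Fin n → ℤ)) : ℝ :=
  ⨆ m : Fin n → ℤ, ‖f.coeff m‖ * gaussWeight p t m

/-- The corner tuple of the box `∏ [sα, rα]` indexed by `c : Fin n → Bool`. -/
def corner {n : ℕ} (s r : Fin n → ℝ) (c : Fin n → Bool) : Fin n → ℝ :=
  fun α => if c α then r α else s α

/-- The interval norm `‖f‖_{[s,r]}`: the maximum of the Gauss norms over the `2ⁿ` corners. -/
noncomputable def intervalGaussNorm (p : ℕ) [Fact p.Prime] {n : ℕ} (s r : Fin n → ℝ)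
    (f : AddMonoidAlgebra ℚ_[p] (Fin n → ℤ)) : ℝ :=
  ⨆ c : Fin n → Bool, gaussNorm p (corner s r c) f

/-- The weight `w(m) = max over corner tuples t of p^{-(Σ tαmα)/(p-1)}`. -/
noncomputable def cornerWeight (p : ℕ) {n : ℕ} (s r : Fin n → ℝ) (m : Fin n → ℤ) : ℝ :=
  ⨆ c : Fin n → Bool, gaussWeight p (corner s r c) m

/-- The monomial `c · T^m` in the Laurent polynomial ring. -/
noncomputable def lmonomial (p : ℕ) [Fact p.Prime] {n : ℕ} (m : Fin n → ℤ) (c : ℚ_[p]) :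
    AddMonoidAlgebra ℚ_[p] (Fin n → ℤ) :=
  AddMonoidAlgebra.single m c

/-- A completion `Π_{[s,r]}` of the Laurent polynomial ring with respect to a norm `N`. -/
structure GaussCompletion (p : ℕ) [Fact p.Prime] (n : ℕ)
    (N : AddMonoidAlgebra ℚ_[p] (Fin n → ℤ) → ℝ) where
  carrier : Type
  [normedRing : NormedCommRing carrier]
  [normedAlgebra : NormedAlgebra ℚ_[p] carrier]
  [complete : CompleteSpace carrier]
  emb : AddMonoidAlgebra ℚ_[p] (Fin n → ℤ) →ₐ[ℚ_[p]] carrier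
  isometric : ∀ f, ‖emb f‖ = N f
  denseRange : DenseRange (fun f => emb f)

attribute [instance] GaussCompletion.normedRing GaussCompletion.normedAlgebra
  GaussCompletion.complete

open Filter Topology

section WeightedSupNorm

variable {𝕜 ι E : Type*} [NormedField 𝕜] [NormedAddCommGroup E] [NormedSpace 𝕜 E]

lemma bddAbove_range_norm_mul (f : ι →₀ 𝕜) (w : ι → ℝ) :
    BddAbove (Set.range fun i => ‖f i‖ * w i) := by
  refine ((f.support.finite_toSet.image fun i => ‖f i‖ * w i).insert 0).bddAbove.mono ?_
  rintro _ ⟨i, rfl⟩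
  by_cases hi : f i = 0
  · simp [hi]
  · exact Set.mem_insert_of_mem _ ⟨i, by simpa using hi, rfl⟩

lemma norm_apply_le_inv_mul_norm {e : (ι →₀ 𝕜) →ₗ[𝕜] E} {w : ι → ℝ} (hw : ∀ i, 0 < w i)
    (he : ∀ f, ‖e f‖ = ⨆ i, ‖f i‖ * w i) (i : ι) (f : ι →₀ 𝕜) :
    ‖f i‖ ≤ (w i)⁻¹ * ‖e f‖ := by
  rw [le_inv_mul_iff₀ (hw i), mul_comm, he]
  exact le_ciSup (bddAbove_range_norm_mul f w) i

structure IsDenseWeightedSupEmbedding (e : (ι →₀ 𝕜) →ₗ[𝕜] E) (w : ι → ℝ) : Prop where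
  weight_pos : ∀ i, 0 < w i
  norm_eq_iSup : ∀ f, ‖e f‖ = ⨆ i, ‖f i‖ * w i
  denseRange : DenseRange e

noncomputable def extendedCoeff [CompleteSpace 𝕜] (e : (ι →₀ 𝕜) →ₗ[𝕜] E) (i : ι) :
    E →L[𝕜] 𝕜 :=
  (Finsupp.lapply (R := 𝕜) i).extendOfNorm e

namespace IsDenseWeightedSupEmbedding

variable [CompleteSpace 𝕜] {e : (ι →₀ 𝕜) →ₗ[𝕜] E} {w : ι → ℝ}

lemma extendedCoeff_apply (h : IsDenseWeightedSupEmbedding e w) (i : ι) (f : ι →₀ 𝕜) :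
    extendedCoeff e i (e f) = f i :=
  LinearMap.extendOfNorm_eq h.denseRange
    ⟨_, norm_apply_le_inv_mul_norm h.weight_pos h.norm_eq_iSup i⟩ f

lemma norm_extendedCoeff_mul_le (h : IsDenseWeightedSupEmbedding e w) (i : ι) (x : E) :
    ‖extendedCoeff e i x‖ * w i ≤ ‖x‖ := by
  rw [mul_comm, ← le_inv_mul_iff₀ (h.weight_pos i)]
  exact LinearMap.norm_extendOfNorm_apply_le h.denseRange _
    (norm_apply_le_inv_mul_norm h.weight_pos h.norm_eq_iSup i) x

lemma eq_extendedCoeff_of_hasSum (h : IsDenseWeightedSupEmbedding e w) {a : ι → 𝕜} {x : E}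
    (ha : HasSum (fun i => e (Finsupp.single i (a i))) x) (j : ι) :
    a j = extendedCoeff e j x := by
  have hj := ha.mapL (extendedCoeff e j)
  simp only [h.extendedCoeff_apply] at hj
  simpa using (hasSum_single j fun i hi => Finsupp.single_eq_of_ne' hi).unique hj

/-- The function `x ↦ ⨆ i, ‖extendedCoeff e i x‖ * w i` is 1-Lipschitz and agrees with the norm
on the dense range of `e`. -/
lemma norm_eq_iSup_norm_extendedCoeff_mul (h : IsDenseWeightedSupEmbedding e w) (x : E) :
    ‖x‖ = ⨆ i, ‖extendedCoeff e i x‖ * w i := by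
  set N : E → ℝ := fun x => ⨆ i, ‖extendedCoeff e i x‖ * w i
  have hbdd (x : E) : BddAbove (Set.range fun i => ‖extendedCoeff e i x‖ * w i) :=
    ⟨‖x‖, Set.forall_mem_range.mpr fun i => h.norm_extendedCoeff_mul_le i x⟩
  have hN (x y : E) : N x ≤ N y + dist x y := by
    refine Real.iSup_le (fun i => ?_) (add_nonneg
      (Real.iSup_nonneg fun i => mul_nonneg (norm_nonneg _) (h.weight_pos i).le) dist_nonneg)
    calc ‖extendedCoeff e i x‖ * w i
        ≤ (‖extendedCoeff e i y‖ + ‖extendedCoeff e i (x - y)‖) * w i := by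
          gcongr
          · exact (h.weight_pos i).le
          · rw [map_sub]
            exact norm_le_norm_add_norm_sub' _ _
      _ ≤ N y + dist x y := by
          rw [add_mul, dist_eq_norm]
          exact add_le_add (le_ciSup (hbdd y) i) (h.norm_extendedCoeff_mul_le i _)
  refine congrFun (h.denseRange.equalizer continuous_norm (LipschitzWith.of_le_add hN).continuous
    (funext fun f => ?_)) x
  simp only [Function.comp_apply, N, h.extendedCoeff_apply, h.norm_eq_iSup]

lemma tendsto_norm_extendedCoeff_mul (h : IsDenseWeightedSupEmbedding e w) (x : E) :
    Tendsto (fun i => ‖extendedCoeff e i x‖ * w i) cofinite (𝓝 0) := by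
  rw [Metric.tendsto_nhds]
  intro ε hε
  obtain ⟨f, hf⟩ := h.denseRange.exists_dist_lt x hε
  filter_upwards [f.support.eventually_cofinite_notMem] with i hi
  have hfi : extendedCoeff e i x = extendedCoeff e i (x - e f) := by
    rw [map_sub, h.extendedCoeff_apply, Finsupp.notMem_support_iff.mp hi, sub_zero]
  rw [Real.dist_0_eq_abs, abs_of_nonneg (mul_nonneg (norm_nonneg _) (h.weight_pos i).le), hfi]
  exact (h.norm_extendedCoeff_mul_le i _).trans_lt (by rwa [← dist_eq_norm])

lemma norm_sum_extendedCoeff_sub_le (h : IsDenseWeightedSupEmbedding e w) {x : E}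
    {t : Finset ι} {ε : ℝ} (hε : 0 ≤ ε) (ht : ∀ j ∉ t, ‖extendedCoeff e j x‖ * w j ≤ ε) :
    ‖∑ i ∈ t, e (Finsupp.single i (extendedCoeff e i x)) - x‖ ≤ ε := by
  classical
  rw [h.norm_eq_iSup_norm_extendedCoeff_mul]
  refine Real.iSup_le (fun j => ?_) hε
  simp only [map_sub, map_sum, h.extendedCoeff_apply, Finsupp.single_apply, Finset.sum_ite_eq']
  split_ifs with hj
  · simpa using hε
  · simpa using ht j hj

lemma hasSum_extendedCoeff (h : IsDenseWeightedSupEmbedding e w) (x : E) :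
    HasSum (fun i => e (Finsupp.single i (extendedCoeff e i x))) x := by
  rw [HasSum, SummationFilter.unconditional_filter, Metric.tendsto_nhds]
  intro ε hε
  have hfin := eventually_cofinite.mp
    ((h.tendsto_norm_extendedCoeff_mul x).eventually (gt_mem_nhds (half_pos hε)))
  rw [eventually_atTop]
  refine ⟨hfin.toFinset, fun t ht => ?_⟩
  rw [dist_eq_norm]
  refine (h.norm_sum_extendedCoeff_sub_le (half_pos hε).le fun j hj => ?_).trans_lt
    (half_lt_self hε)
  exact (not_not.mp fun hlt => hj (ht (hfin.mem_toFinset.mpr hlt))).le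

end IsDenseWeightedSupEmbedding

end WeightedSupNorm

lemma Real.iSup_comm_of_finite {α β : Type*} [Finite α] {g : α → β → ℝ} (hg : ∀ a b, 0 ≤ g a b)
    (hb : ∀ a, BddAbove (Set.range (g a))) : ⨆ a, ⨆ b, g a b = ⨆ b, ⨆ a, g a b := by
  have hS_nonneg : 0 ≤ ⨆ a, ⨆ b, g a b := Real.iSup_nonneg fun a => Real.iSup_nonneg (hg a)
  have hS (b : β) : ⨆ a, g a b ≤ ⨆ a, ⨆ b, g a b :=
    Real.iSup_le (fun a => (le_ciSup (hb a) b).trans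
      (le_ciSup (f := fun a => ⨆ b, g a b) (Set.finite_range _).bddAbove a)) hS_nonneg
  have hT_nonneg : 0 ≤ ⨆ b, ⨆ a, g a b := Real.iSup_nonneg fun b => Real.iSup_nonneg (hg · b)
  have hT (a : α) (b : β) : g a b ≤ ⨆ b, ⨆ a, g a b :=
    (le_ciSup (f := (g · b)) (Set.finite_range _).bddAbove a).trans
      (le_ciSup ⟨_, Set.forall_mem_range.mpr hS⟩ b)
  exact le_antisymm (Real.iSup_le (fun a => Real.iSup_le (hT a) hT_nonneg) hT_nonneg)
    (Real.iSup_le hS hS_nonneg)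

section GaussNorm

variable {p n : ℕ} {s r : Fin n → ℝ}

lemma cornerWeight_pos (hp : 0 < p) (m : Fin n → ℤ) :
    0 < cornerWeight p s r m :=
  (Real.rpow_pos_of_pos (Nat.cast_pos.mpr hp) _).trans_le
    (le_ciSup (f := fun c => gaussWeight p (corner s r c) m) (Set.finite_range _).bddAbove
      fun _ => false)

lemma intervalGaussNorm_eq_iSup [Fact p.Prime] (f : AddMonoidAlgebra ℚ_[p] (Fin n → ℤ)) :
    intervalGaussNorm p s r f = ⨆ m, ‖f.coeff m‖ * cornerWeight p s r m := by
  simp only [intervalGaussNorm, gaussNorm, cornerWeight, Real.mul_iSup_of_nonneg (norm_nonneg _)]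
  exact Real.iSup_comm_of_finite
    (fun c m => mul_nonneg (norm_nonneg _) (Real.rpow_nonneg (Nat.cast_nonneg p) _))
    (fun c => bddAbove_range_norm_mul f.coeff _)

end GaussNorm

theorem gaussCompletion_unique_expansion_and_norm_general
    (p : ℕ) [Fact p.Prime] (n : ℕ) (s r : Fin n → ℝ)
    (C : GaussCompletion p n (intervalGaussNorm p s r)) :
    (∀ F : C.carrier, ∃! a : (Fin n → ℤ) → ℚ_[p],
      Filter.Tendsto (fun m => ‖a m‖ * cornerWeight p s r m) Filter.cofinite (nhds 0) ∧
      HasSum (fun m => C.emb (lmonomial p m (a m))) F) ∧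
    (∀ (F : C.carrier) (a : (Fin n → ℤ) → ℚ_[p]),
      Filter.Tendsto (fun m => ‖a m‖ * cornerWeight p s r m) Filter.cofinite (nhds 0) →
      HasSum (fun m => C.emb (lmonomial p m (a m))) F →
      ‖F‖ = ⨆ m : Fin n → ℤ, ‖a m‖ * cornerWeight p s r m) := by
  set e := C.emb.toLinearMap ∘ₗ (AddMonoidAlgebra.coeffLinearEquiv ℚ_[p]).symm.toLinearMap
  have he : IsDenseWeightedSupEmbedding e (cornerWeight p s r) := by
    refine ⟨cornerWeight_pos (Fact.out : p.Prime).pos,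
      fun f => (C.isometric _).trans (intervalGaussNorm_eq_iSup _), ?_⟩
    rw [DenseRange, LinearMap.coe_comp, LinearEquiv.coe_coe, (LinearEquiv.surjective _).range_comp]
    exact C.denseRange
  refine ⟨fun F => ⟨fun m => extendedCoeff e m F,
    ⟨he.tendsto_norm_extendedCoeff_mul F, he.hasSum_extendedCoeff F⟩,
    fun a ha => funext (he.eq_extendedCoeff_of_hasSum ha.2)⟩, fun F a _ ha => ?_⟩
  obtain rfl : a = fun m => extendedCoeff e m F := funext (he.eq_extendedCoeff_of_hasSum ha)
  exact he.norm_eq_iSup_norm_extendedCoeff_mul F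

/-- Every element `F` of the completion `Π_{[s,r]}` has a unique expansion
`F = Σ_{m∈ℤⁿ} aₘ Tᵐ` converging in `Π_{[s,r]}`, where `|aₘ|·w(m) → 0` along the cofinite
filter of `ℤⁿ`; moreover `‖F‖_{[s,r]} = sup_m |aₘ|·w(m)`.  In other words, `Π_{[s,r]}` is
isometrically isomorphic to the weighted `c₀`-space of `ℤⁿ`-indexed families of `ℚ_p`-numbers
with weight `w`, the monomials `Tᵐ` forming an orthogonal topological basis. -/
theorem gaussCompletion_unique_expansion_and_norm
    (p : ℕ) [Fact p.Prime] (n : ℕ) (s r : Fin n → ℝ)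
    (hs : ∀ α, 0 < s α) (hsr : ∀ α, s α ≤ r α)
    (C : GaussCompletion p n (intervalGaussNorm p s r)) :
    (∀ F : C.carrier, ∃! a : (Fin n → ℤ) → ℚ_[p],
      Filter.Tendsto (fun m => ‖a m‖ * cornerWeight p s r m) Filter.cofinite (nhds 0) ∧
      HasSum (fun m => C.emb (lmonomial p m (a m))) F) ∧
    (∀ (F : C.carrier) (a : (Fin n → ℤ) → ℚ_[p]),
      Filter.Tendsto (fun m => ‖a m‖ * cornerWeight p s r m) Filter.cofinite (nhds 0) →
      HasSum (fun m => C.emb (lmonomial p m (a m))) F →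
      ‖F‖ = ⨆ m : Fin n → ℤ, ‖a m‖ * cornerWeight p s r m) :=
  gaussCompletion_unique_expansion_and_norm_general p n s r C
end

section
/- Fix 1 ≤ α ≤ n and a tuple r = (r_1,…,r_n) of positive reals with r_α ≤ 1. For every polynomial f ∈ ℚ_p[T_1,…,T_n] one has ‖ f(T_1,…,T_{α−1}, (1+T_α)^p − 1, T_{α+1},…,T_n) ‖_r = ‖ f ‖_{r'}, where r'_β = r_β for β ≠ α and r'_α = p·r_α. -/
open scoped BigOperators

/-- The Gauss norm `‖Σ aₘ Tᵐ‖_t` on the polynomial ring `ℚ_p[T₁,…,Tₙ]`. -/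
noncomputable def polyGaussNorm (p : ℕ) [Fact p.Prime] {n : ℕ} (t : Fin n → ℝ)
    (f : MvPolynomial (Fin n) ℚ_[p]) : ℝ :=
  ⨆ m : Fin n →₀ ℕ, ‖MvPolynomial.coeff m f‖ * gaussWeight p t (fun α => (m α : ℤ))

/-- The `ℚ_p`-algebra endomorphism of `ℚ_p[T₁,…,Tₙ]` sending `T_α` to `(1+T_α)^p − 1`
and fixing the other variables. -/
noncomputable def frobSubst (p : ℕ) [Fact p.Prime] {n : ℕ} (α : Fin n) :
    MvPolynomial (Fin n) ℚ_[p] →ₐ[ℚ_[p]] MvPolynomial (Fin n) ℚ_[p] :=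
  MvPolynomial.aeval
    (fun β => if β = α then (1 + MvPolynomial.X α) ^ p - 1 else MvPolynomial.X β)

/-!
Let `q = (1 + X)^p - 1`, so the substitution sends `a_m T^m` to `a_m T^{m - m_α e_α} q(T_α)^{m_α}`.
Since `p ∣ C(p, k)` for `0 < k < p`, `‖q_k‖ ≤ p^{(k - p)/(p - 1)}`; such bounds multiply, so
`‖(q^j)_d‖ ≤ p^{(d - pj)/(p - 1)}`, and `q^j` is monic of degree `pj`. As `r_α ≤ 1`, this gives
`‖(q^j)_d‖ ≤ p^{r_α (d - pj)/(p - 1)}`, exactly the ratio of the `r'`-weight of `T^m` (with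
`m_α = j`) to the `r`-weight of `T^m` with `m_α` replaced by `d`. The ultrametric inequality
then gives `‖f(…, q(T_α), …)‖_r ≤ ‖f‖_{r'}`.

Conversely, among the monomials `T^{m₀}` realising `‖f‖_{r'}` take one of largest degree in
`T_α`, and let `m` be `m₀` with `m₀_α` replaced by `p m₀_α`. After the substitution the
coefficient of `T^m` is `a_{m₀}` plus contributions of monomials `T^{m'}` with `m'_α > m₀_α`
(for `m'_α < m₀_α`, `q(T_α)^{m'_α}` has degree `< p m₀_α`), which are strictly smaller because
`T^{m'}` does not realise the norm. So it has norm `‖a_{m₀}‖`, and the `r`-weight of `T^m` is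
the `r'`-weight of `T^{m₀}`.
-/

lemma IsUltrametricDist.norm_sum_lt_of_forall_lt {M ι : Type*} [SeminormedAddCommGroup M]
    [IsUltrametricDist M] {s : Finset ι} {f : ι → M} {C : ℝ} (hC : 0 < C)
    (h : ∀ i ∈ s, ‖f i‖ < C) : ‖∑ i ∈ s, f i‖ < C := by
  rcases s.eq_empty_or_nonempty with rfl | hs
  · simpa using hC
  obtain ⟨i, hi, hle⟩ := exists_norm_finsetSum_le_of_nonempty hs f
  exact hle.trans_lt (h i hi)

open MvPolynomial in
lemma MvPolynomial.coeff_monomial_mul_aeval_X {R σ : Type*} [CommSemiring R] [DecidableEq σ]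
    {s : σ →₀ ℕ} {i : σ} (hs : s i = 0) (a : R) (Q : Polynomial R) (m : σ →₀ ℕ) :
    coeff m (monomial s a * Polynomial.aeval (X i) Q) =
      if s.update i (m i) = m then a * Q.coeff (m i) else 0 := by
  have hadd : ∀ e, s + Finsupp.single i e = s.update i e := fun e => by
    ext j
    rcases eq_or_ne j i with rfl | hj <;> simp [*]
  rw [Polynomial.aeval_def, Polynomial.eval₂_eq_sum, Polynomial.sum_def, Finset.mul_sum,
    coeff_sum]
  simp only [algebraMap_eq, X_pow_eq_monomial, C_mul_monomial, monomial_mul, mul_one, hadd,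
    coeff_monomial]
  refine Finset.sum_eq_single (m i) (fun e _ he => if_neg fun h => he ?_) fun hm => ?_
  · simp [← h]
  · rw [Polynomial.notMem_support_iff.1 hm, mul_zero, ite_self]

open Function

section GaussExp

variable (p : ℕ) [Fact p.Prime]

noncomputable def gaussExp (x : ℝ) : ℝ := (p : ℝ) ^ (x / ((p : ℝ) - 1))

lemma gaussExp_pos (x : ℝ) : 0 < gaussExp p x :=
  Real.rpow_pos_of_pos (by exact_mod_cast (Fact.out : p.Prime).pos) _

omit [Fact p.Prime] in
lemma gaussExp_zero : gaussExp p 0 = 1 := by simp [gaussExp]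

lemma gaussExp_add (x y : ℝ) : gaussExp p (x + y) = gaussExp p x * gaussExp p y := by
  rw [gaussExp, gaussExp, gaussExp, add_div,
    Real.rpow_add (by exact_mod_cast (Fact.out : p.Prime).pos)]

lemma gaussExp_monotone : Monotone (gaussExp p) := fun x y hxy => by
  have hp : (1 : ℝ) < p := by exact_mod_cast (Fact.out : p.Prime).one_lt
  exact Real.rpow_le_rpow_of_exponent_le hp.le (div_le_div_of_nonneg_right hxy (by linarith))

omit [Fact p.Prime] in
lemma gaussWeight_eq_gaussExp {n : ℕ} (t : Fin n → ℝ) (m : Fin n → ℤ) :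
    gaussWeight p t m = gaussExp p (-∑ β, t β * m β) := by
  rw [gaussWeight, gaussExp, neg_div]

lemma gaussWeight_update {n : ℕ} (t : Fin n → ℝ) (m : Fin n → ℤ) (α : Fin n) (d : ℤ) :
    gaussWeight p t (update m α d) = gaussWeight p t m * gaussExp p (t α * ((m α : ℝ) - d)) := by
  rw [gaussWeight_eq_gaussExp, gaussWeight_eq_gaussExp, ← gaussExp_add,
    Fintype.sum_eq_add_sum_compl α, Fintype.sum_eq_add_sum_compl α (fun β => t β * m β),
    update_self, Finset.sum_congr rfl fun β hβ => by rw [update_of_ne (by simpa using hβ)]]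
  congr 1
  ring

lemma gaussWeight_update_radius {n : ℕ} (t : Fin n → ℝ) (m : Fin n → ℤ) (α : Fin n) (s : ℝ) :
    gaussWeight p (update t α s) m = gaussWeight p t m * gaussExp p ((t α - s) * (m α : ℝ)) := by
  rw [gaussWeight_eq_gaussExp, gaussWeight_eq_gaussExp, ← gaussExp_add,
    Fintype.sum_eq_add_sum_compl α, Fintype.sum_eq_add_sum_compl α (fun β => t β * m β),
    update_self, Finset.sum_congr rfl fun β hβ => by rw [update_of_ne (by simpa using hβ)]]
  congr 1
  ring

end GaussExp

section FrobPoly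

open Polynomial

variable (p : ℕ) [Fact p.Prime]

noncomputable def frobPoly : ℚ_[p][X] := (1 + X) ^ p - 1

lemma frobPoly_monic : (frobPoly p).Monic := by
  have h : (X + C 1 : ℚ_[p][X]) ^ p - 1 = frobPoly p := by rw [frobPoly, C_1, add_comm]
  rw [← h]
  exact ((monic_X_add_C 1).pow p).sub_of_left (by
    rw [degree_one, degree_pow, degree_X_add_C, nsmul_one]
    exact_mod_cast (Fact.out : p.Prime).pos)

lemma natDegree_frobPoly : (frobPoly p).natDegree = p := by
  rw [frobPoly, ← C_1, natDegree_sub_C, add_comm, natDegree_pow_X_add_C]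

lemma natDegree_frobPoly_pow (j : ℕ) : (frobPoly p ^ j).natDegree = p * j := by
  rw [(frobPoly_monic p).natDegree_pow, natDegree_frobPoly, mul_comm]

lemma coeff_frobPoly_pow_self (j : ℕ) : (frobPoly p ^ j).coeff (p * j) = 1 := by
  rw [← natDegree_frobPoly_pow, coeff_natDegree]
  exact ((frobPoly_monic p).pow j).leadingCoeff

lemma coeff_frobPoly_pow_of_lt {j d : ℕ} (h : p * j < d) : (frobPoly p ^ j).coeff d = 0 :=
  coeff_eq_zero_of_natDegree_lt (by rwa [natDegree_frobPoly_pow])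

lemma norm_coeff_frobPoly_le (k : ℕ) : ‖(frobPoly p).coeff k‖ ≤ gaussExp p (k - p) := by
  have hp := (Fact.out : p.Prime)
  rw [frobPoly, coeff_sub, coeff_one_add_X_pow, coeff_one]
  rcases Nat.eq_zero_or_pos k with rfl | hk
  · simpa using (gaussExp_pos p _).le
  rw [if_neg hk.ne', sub_zero]
  rcases lt_trichotomy k p with hkp | rfl | hkp
  · have h : ‖((p.choose k : ℤ) : ℚ_[p])‖ ≤ (p : ℝ) ^ (-(1 : ℕ) : ℤ) :=
      (Padic.norm_int_le_pow_iff_dvd _ 1).2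
        (by rw [pow_one]; exact_mod_cast hp.dvd_choose_self hk.ne' hkp)
    calc ‖(p.choose k : ℚ_[p])‖ ≤ (p : ℝ) ^ (-1 : ℤ) := by exact_mod_cast h
      _ = gaussExp p (-((p : ℝ) - 1)) := by
        rw [gaussExp, neg_div, div_self (sub_ne_zero.2 (by exact_mod_cast hp.one_lt.ne')),
          Real.rpow_neg_one, zpow_neg_one]
      _ ≤ gaussExp p (k - p) := gaussExp_monotone p (by
        have : (1 : ℝ) ≤ k := by exact_mod_cast hk
        linarith)
  · simp [gaussExp_zero]
  · simpa [Nat.choose_eq_zero_of_lt hkp] using (gaussExp_pos p _).le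

lemma norm_coeff_mul_le_gaussExp {P Q : ℚ_[p][X]} {a b : ℝ}
    (hP : ∀ k, ‖P.coeff k‖ ≤ gaussExp p (k - a)) (hQ : ∀ k, ‖Q.coeff k‖ ≤ gaussExp p (k - b))
    (k : ℕ) : ‖(P * Q).coeff k‖ ≤ gaussExp p (k - (a + b)) := by
  rw [coeff_mul]
  refine IsUltrametricDist.norm_sum_le_of_forall_le_of_nonneg (gaussExp_pos p _).le
    fun x hx => ?_
  have hx : (x.1 : ℝ) + x.2 = k := by exact_mod_cast Finset.HasAntidiagonal.mem_antidiagonal.1 hx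
  calc ‖P.coeff x.1 * Q.coeff x.2‖ ≤ gaussExp p (x.1 - a) * gaussExp p (x.2 - b) := by
        rw [norm_mul]
        exact mul_le_mul (hP _) (hQ _) (norm_nonneg _) (gaussExp_pos p _).le
    _ = gaussExp p (k - (a + b)) := by
      rw [← gaussExp_add, ← hx]
      congr 1
      ring

lemma norm_coeff_frobPoly_pow_le (j k : ℕ) :
    ‖(frobPoly p ^ j).coeff k‖ ≤ gaussExp p (k - p * j) := by
  induction j generalizing k with
  | zero =>
    rcases Nat.eq_zero_or_pos k with rfl | hk
    · simp [gaussExp_zero]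
    · simpa [coeff_one, hk.ne'] using (gaussExp_pos p _).le
  | succ j ih =>
    rw [pow_succ, Nat.cast_succ, mul_add_one]
    exact norm_coeff_mul_le_gaussExp p ih (norm_coeff_frobPoly_le p) k

lemma norm_coeff_frobPoly_pow_le_of_le_one {s : ℝ} (hs : s ≤ 1) (j d : ℕ) :
    ‖(frobPoly p ^ j).coeff d‖ ≤ gaussExp p (s * (d - p * j)) := by
  rcases le_or_gt d (p * j) with hd | hd
  · refine (norm_coeff_frobPoly_pow_le p j d).trans (gaussExp_monotone p ?_)
    have : (d : ℝ) ≤ p * j := by exact_mod_cast hd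
    nlinarith
  · rw [coeff_frobPoly_pow_of_lt p hd, norm_zero]
    exact (gaussExp_pos p _).le

end FrobPoly

section FrobSubstCoeff

open MvPolynomial

variable (p : ℕ) [Fact p.Prime] {n : ℕ} (α : Fin n)

lemma frobSubst_monomial_of_eq_zero {s : Fin n →₀ ℕ} (hs : s α = 0) (a : ℚ_[p]) :
    frobSubst p α (monomial s a) = monomial s a := by
  rw [frobSubst, aeval_monomial, monomial_eq, algebraMap_eq]
  congr 1
  refine Finsupp.prod_congr fun β hβ => ?_
  rw [if_neg (ne_of_mem_of_not_mem hβ (by simpa using hs))]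

lemma frobSubst_monomial (m : Fin n →₀ ℕ) (a : ℚ_[p]) :
    frobSubst p α (monomial m a) =
      monomial (m.erase α) a * Polynomial.aeval (X α) (frobPoly p ^ m α) := by
  conv_lhs => rw [← Finsupp.erase_add_single α m, monomial_add_single]
  rw [map_mul, frobSubst_monomial_of_eq_zero p α (Finsupp.erase_same ..), map_pow, map_pow]
  simp [frobSubst, frobPoly]

lemma coeff_frobSubst_monomial (m' m : Fin n →₀ ℕ) (a : ℚ_[p]) :
    coeff m (frobSubst p α (monomial m' a)) =
      if m'.update α (m α) = m then a * (frobPoly p ^ m' α).coeff (m α) else 0 := by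
  rw [frobSubst_monomial, coeff_monomial_mul_aeval_X (Finsupp.erase_same ..),
    Finsupp.update_erase_eq_update]

lemma coeff_frobSubst (f : MvPolynomial (Fin n) ℚ_[p]) (m : Fin n →₀ ℕ) :
    coeff m (frobSubst p α f) = ∑ m' ∈ f.support with m'.update α (m α) = m,
      coeff m' f * (frobPoly p ^ m' α).coeff (m α) := by
  conv_lhs => rw [f.as_sum, map_sum, coeff_sum]
  simp only [coeff_frobSubst_monomial, Finset.sum_filter]

end FrobSubstCoeff

section GaussTerm

open MvPolynomial

variable (p : ℕ) [Fact p.Prime] {n : ℕ}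

noncomputable def gaussTerm (t : Fin n → ℝ) (f : MvPolynomial (Fin n) ℚ_[p])
    (m : Fin n →₀ ℕ) : ℝ :=
  ‖coeff m f‖ * gaussWeight p t (fun β => (m β : ℤ))

lemma gaussWeight_pos (t : Fin n → ℝ) (m : Fin n → ℤ) : 0 < gaussWeight p t m :=
  gaussWeight_eq_gaussExp p t m ▸ gaussExp_pos p _

lemma gaussTerm_nonneg (t : Fin n → ℝ) (f : MvPolynomial (Fin n) ℚ_[p]) (m : Fin n →₀ ℕ) :
    0 ≤ gaussTerm p t f m :=
  mul_nonneg (norm_nonneg _) (gaussWeight_pos p t _).le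

lemma gaussTerm_le_polyGaussNorm (t : Fin n → ℝ) (f : MvPolynomial (Fin n) ℚ_[p])
    (m : Fin n →₀ ℕ) : gaussTerm p t f m ≤ polyGaussNorm p t f := by
  refine le_ciSup (f := gaussTerm p t f) ⟨∑ m' ∈ f.support, gaussTerm p t f m', ?_⟩ m
  rintro _ ⟨m', rfl⟩
  by_cases hm' : m' ∈ f.support
  · exact Finset.single_le_sum (f := gaussTerm p t f) (fun _ _ => gaussTerm_nonneg p t f _) hm'
  · rw [gaussTerm, notMem_support_iff.1 hm', norm_zero, zero_mul]
    exact Finset.sum_nonneg fun _ _ => gaussTerm_nonneg p t f _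

lemma polyGaussNorm_nonneg (t : Fin n → ℝ) (f : MvPolynomial (Fin n) ℚ_[p]) :
    0 ≤ polyGaussNorm p t f :=
  (gaussTerm_nonneg p t f 0).trans (gaussTerm_le_polyGaussNorm p t f 0)

lemma exists_gaussTerm_lexMax (t : Fin n → ℝ) {f : MvPolynomial (Fin n) ℚ_[p]} (hf : f ≠ 0)
    (α : Fin n) : ∃ m₀ ∈ f.support, (∀ m, gaussTerm p t f m ≤ gaussTerm p t f m₀) ∧
      ∀ m ∈ f.support, gaussTerm p t f m = gaussTerm p t f m₀ → m α ≤ m₀ α := by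
  obtain ⟨m₀, hm₀, hmax⟩ := Finset.exists_max_image f.support
    (fun m => toLex (gaussTerm p t f m, m α)) (support_nonempty.2 hf)
  refine ⟨m₀, hm₀, fun m => ?_, fun m hm heq => ?_⟩
  · by_cases hm : m ∈ f.support
    · exact Prod.Lex.monotone_fst _ _ (hmax m hm)
    · rw [gaussTerm, notMem_support_iff.1 hm, norm_zero, zero_mul]
      exact gaussTerm_nonneg p t f m₀
  · exact (Prod.Lex.le_iff.1 (hmax m hm)).resolve_left heq.not_lt |>.2

end GaussTerm

section FrobSubstNorm

open MvPolynomial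

variable (p : ℕ) [Fact p.Prime] {n : ℕ} (α : Fin n) (r : Fin n → ℝ)

lemma gaussWeight_frob (m : Fin n →₀ ℕ) (d : ℕ) :
    gaussWeight p (update r α (p * r α)) (fun β => (m β : ℤ)) =
      gaussWeight p r (fun β => (m.update α d β : ℤ)) * gaussExp p (r α * (d - p * m α)) := by
  have hcoe : (fun β => (m.update α d β : ℤ)) = update (fun β => (m β : ℤ)) α d := by
    ext β
    rcases eq_or_ne β α with rfl | hβ <;> simp [*]
  rw [gaussWeight_update_radius, hcoe, gaussWeight_update, mul_assoc, ← gaussExp_add]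
  congr 2
  push_cast
  ring

lemma gaussWeight_update_frob (m : Fin n →₀ ℕ) :
    gaussWeight p r (fun β => (m.update α (p * m α) β : ℤ)) =
      gaussWeight p (update r α (p * r α)) (fun β => (m β : ℤ)) := by
  rw [gaussWeight_frob p α r m (p * m α)]
  push_cast
  rw [sub_self, mul_zero, gaussExp_zero, mul_one]

lemma norm_coeff_mul_coeff_frobPoly_pow_mul_gaussWeight_le (hrα : r α ≤ 1)
    (f : MvPolynomial (Fin n) ℚ_[p]) (m : Fin n →₀ ℕ) (d : ℕ) :
    ‖coeff m f * (frobPoly p ^ m α).coeff d‖ * gaussWeight p r (fun β => (m.update α d β : ℤ))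
      ≤ gaussTerm p (update r α (p * r α)) f m := by
  rw [gaussTerm, gaussWeight_frob p α r m d, norm_mul, mul_assoc, mul_comm (gaussWeight _ _ _)]
  gcongr
  · exact (gaussWeight_pos p r _).le
  · exact norm_coeff_frobPoly_pow_le_of_le_one p hrα _ _

lemma polyGaussNorm_frobSubst_le (hrα : r α ≤ 1) (f : MvPolynomial (Fin n) ℚ_[p]) :
    polyGaussNorm p r (frobSubst p α f) ≤ polyGaussNorm p (update r α (p * r α)) f := by
  refine ciSup_le fun m => ?_
  have hW := gaussWeight_pos p r (fun β => (m β : ℤ))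
  rw [← le_div_iff₀ hW, coeff_frobSubst]
  refine IsUltrametricDist.norm_sum_le_of_forall_le_of_nonneg
    (div_nonneg (polyGaussNorm_nonneg p _ f) hW.le) fun m' hm' => ?_
  obtain ⟨-, hupd⟩ := Finset.mem_filter.1 hm'
  rw [le_div_iff₀ hW]
  calc _ ≤ gaussTerm p (update r α (p * r α)) f m' := by
        simpa only [hupd] using
          norm_coeff_mul_coeff_frobPoly_pow_mul_gaussWeight_le p α r hrα f m' (m α)
    _ ≤ _ := gaussTerm_le_polyGaussNorm p _ f m'

lemma norm_coeff_frobSubst_update_of_lexMax (hrα : r α ≤ 1) {f : MvPolynomial (Fin n) ℚ_[p]}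
    {m₀ : Fin n →₀ ℕ} (hm₀ : m₀ ∈ f.support)
    (hmax : ∀ m, gaussTerm p (update r α (p * r α)) f m ≤ gaussTerm p (update r α (p * r α)) f m₀)
    (hlex : ∀ m ∈ f.support, gaussTerm p (update r α (p * r α)) f m =
      gaussTerm p (update r α (p * r α)) f m₀ → m α ≤ m₀ α) :
    ‖coeff (m₀.update α (p * m₀ α)) (frobSubst p α f)‖ = ‖coeff m₀ f‖ := by
  set m := m₀.update α (p * m₀ α)
  have hmα : m α = p * m₀ α := by simp [m]
  have hf₀ : 0 < ‖coeff m₀ f‖ := norm_pos_iff.2 (mem_support_iff.1 hm₀)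
  have hW := gaussWeight_pos p r (fun β => (m β : ℤ))
  have hrest : ∀ m' ∈ (f.support.filter fun m' => m'.update α (m α) = m).erase m₀,
      ‖coeff m' f * (frobPoly p ^ m' α).coeff (m α)‖ < ‖coeff m₀ f‖ := by
    intro m' hm'
    obtain ⟨hne, hm'f, hupd⟩ : m' ≠ m₀ ∧ m' ∈ f.support ∧ m'.update α (m α) = m := by
      simpa [and_assoc] using hm'
    have hle := norm_coeff_mul_coeff_frobPoly_pow_mul_gaussWeight_le p α r hrα f m' (m α)
    rw [hupd] at hle
    rcases (hmax m').lt_or_eq with hlt | heq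
    · refine lt_of_mul_lt_mul_right (hle.trans_lt (hlt.trans_eq ?_)) hW.le
      rw [gaussTerm, gaussWeight_update_frob]
    · have hlt : m' α < m₀ α := (hlex m' hm'f heq).lt_of_ne fun hα => hne <|
        calc m' = (m'.update α (m α)).update α (m' α) := by simp
          _ = m₀ := by rw [hupd, hα]; simp [m]
      rw [hmα, coeff_frobPoly_pow_of_lt p (Nat.mul_lt_mul_of_pos_left hlt
        (Fact.out : p.Prime).pos), mul_zero, norm_zero]
      exact hf₀
  have hlead : coeff m₀ f * (frobPoly p ^ m₀ α).coeff (m α) = coeff m₀ f := by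
    rw [hmα, coeff_frobPoly_pow_self, mul_one]
  rw [coeff_frobSubst, ← Finset.add_sum_erase _ _ (Finset.mem_filter.2
    ⟨hm₀, show m₀.update α (m α) = m by rw [hmα]⟩), hlead]
  have hlt := IsUltrametricDist.norm_sum_lt_of_forall_lt hf₀ hrest
  rw [IsUltrametricDist.norm_add_eq_max_of_norm_ne_norm hlt.ne', max_eq_left hlt.le]

lemma le_polyGaussNorm_frobSubst (hrα : r α ≤ 1) (f : MvPolynomial (Fin n) ℚ_[p]) :
    polyGaussNorm p (update r α (p * r α)) f ≤ polyGaussNorm p r (frobSubst p α f) := by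
  rcases eq_or_ne f 0 with rfl | hf
  · simp [polyGaussNorm]
  obtain ⟨m₀, hm₀, hmax, hlex⟩ := exists_gaussTerm_lexMax p (update r α (p * r α)) hf α
  calc polyGaussNorm p (update r α (p * r α)) f ≤ gaussTerm p (update r α (p * r α)) f m₀ :=
        ciSup_le hmax
    _ = gaussTerm p r (frobSubst p α f) (m₀.update α (p * m₀ α)) := by
        rw [gaussTerm, gaussTerm, norm_coeff_frobSubst_update_of_lexMax p α r hrα hm₀ hmax hlex,
          gaussWeight_update_frob]
    _ ≤ polyGaussNorm p r (frobSubst p α f) := gaussTerm_le_polyGaussNorm p r _ _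

end FrobSubstNorm

theorem polyGaussNorm_frobSubst_general
    (p : ℕ) [Fact p.Prime] (n : ℕ) (α : Fin n) (r : Fin n → ℝ)
    (hrα : r α ≤ 1) (f : MvPolynomial (Fin n) ℚ_[p]) :
    polyGaussNorm p r (frobSubst p α f) =
      polyGaussNorm p (Function.update r α ((p : ℝ) * r α)) f :=
  (polyGaussNorm_frobSubst_le p α r hrα f).antisymm (le_polyGaussNorm_frobSubst p α r hrα f)

/-- For `0 < r` with `r_α ≤ 1`, substituting `(1+T_α)^p − 1` for `T_α` transforms the Gauss
norm `‖·‖_{r'}` (with `r'_α = p·r_α` and `r'_β = r_β` for `β ≠ α`) into `‖·‖_r`: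
`‖f(…,(1+T_α)^p−1,…)‖_r = ‖f‖_{r'}` for every polynomial `f`. -/
theorem polyGaussNorm_frobSubst
    (p : ℕ) [Fact p.Prime] (n : ℕ) (α : Fin n) (r : Fin n → ℝ)
    (hr : ∀ β, 0 < r β) (hrα : r α ≤ 1) (f : MvPolynomial (Fin n) ℚ_[p]) :
    polyGaussNorm p r (frobSubst p α f) =
      polyGaussNorm p (Function.update r α ((p : ℝ) * r α)) f :=
  polyGaussNorm_frobSubst_general p n α r hrα f
end

section
/- Let K be a complete field with a nontrivial nonarchimedean absolute value (for example K = ℚ_p), let H be a unital Banach K-algebra (not necessarily commutative), and let M be a Banach K-space equipped with a left H-module structure satisfying ‖h·m‖ ≤ ‖h‖·‖m‖ for all h ∈ H, m ∈ M. Suppose M is generated as a left H-module by elements f_1,…,f_n ∈ M. Then there exists ε > 0 such that for any elements f_1',…,f_n' ∈ M with ‖f_i − f_i'‖ < ε for all i = 1,…,n, the elements f_1',…,f_n' also generate M as a left H-module. -/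
/-! After renorming `M` so that `K` acts boundedly through `H`, the map `c ↦ ∑ cᵢ • fᵢ` is a
surjection of Banach spaces `Hᵏ → M` over `K`, so by the open mapping theorem every `m` is
`∑ cᵢ • fᵢ` with `‖c‖ ≤ C * ‖m‖`. Writing `fᵢ - f'ᵢ = ∑ Gᵢⱼ • fⱼ` in this way gives
`f' = (1 - G) f` for a matrix `G` of small norm; `1 - G` is then invertible by the Neumann series
in the Banach algebra of `k × k` matrices over `H`, so `f = (1 - G)⁻¹ f'` lies in the span of
`f'`. -/

open Set Submodule

/-- `M` as a `K`-vector space through `algebraMap K H`. As `‖(1 : H)‖` may exceed `1`, the norm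
of `M` need not satisfy `‖c • m‖ ≤ ‖c‖ * ‖m‖` for this action, so it is replaced by the
equivalent norm `⨆ c ≠ 0, ‖c • m‖ / ‖c‖`. -/
def RenormedRestrictScalars (_K _H M : Type*) : Type _ := M

namespace RenormedRestrictScalars

variable {K H M : Type*} [NontriviallyNormedField K] [NormedRing H] [NormedAlgebra K H]
  [NormedAddCommGroup M] [Module H M]

instance : AddCommGroup (RenormedRestrictScalars K H M) := inferInstanceAs (AddCommGroup M)

noncomputable instance : Module K (RenormedRestrictScalars K H M) :=
  Module.compHom M (algebraMap K H)

variable (K H) in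
def of : M ≃+ RenormedRestrictScalars K H M := AddEquiv.refl M

variable (K H) in
noncomputable def renorm (m : M) : ℝ := ⨆ c : Kˣ, ‖algebraMap K H c • m‖ / ‖(c : K)‖

theorem renorm_neg (m : M) : renorm K H (-m) = renorm K H m := by
  simp only [renorm, smul_neg, norm_neg]

variable [IsBoundedSMul H M]

theorem norm_algebraMap_smul_div_le (c : Kˣ) (m : M) :
    ‖algebraMap K H c • m‖ / ‖(c : K)‖ ≤ ‖(1 : H)‖ * ‖m‖ := by
  rw [div_le_iff₀ (norm_pos_iff.2 c.ne_zero)]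
  calc ‖algebraMap K H c • m‖ ≤ ‖algebraMap K H c‖ * ‖m‖ := norm_smul_le _ _
    _ = ‖(1 : H)‖ * ‖m‖ * ‖(c : K)‖ := by rw [norm_algebraMap]; ring

variable (K H) in
theorem bddAbove_range_norm_algebraMap_smul_div (m : M) :
    BddAbove (range fun c : Kˣ ↦ ‖algebraMap K H c • m‖ / ‖(c : K)‖) :=
  ⟨_, forall_mem_range.2 fun c ↦ norm_algebraMap_smul_div_le c m⟩

theorem norm_le_renorm (m : M) : ‖m‖ ≤ renorm K H m :=
  (le_ciSup (bddAbove_range_norm_algebraMap_smul_div K H m) 1).trans_eq' (by simp)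

theorem renorm_le (m : M) : renorm K H m ≤ ‖(1 : H)‖ * ‖m‖ :=
  ciSup_le fun c ↦ norm_algebraMap_smul_div_le c m

theorem renorm_zero : renorm K H (0 : M) = 0 :=
  le_antisymm (by simpa using renorm_le (K := K) (H := H) (0 : M))
    (by simpa using norm_le_renorm (K := K) (H := H) (0 : M))

theorem renorm_add_le (m n : M) : renorm K H (m + n) ≤ renorm K H m + renorm K H n :=
  ciSup_le fun c ↦ calc
    ‖algebraMap K H c • (m + n)‖ / ‖(c : K)‖
        ≤ ‖algebraMap K H c • m‖ / ‖(c : K)‖ + ‖algebraMap K H c • n‖ / ‖(c : K)‖ := by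
      rw [smul_add, ← add_div]; gcongr; exact norm_add_le _ _
    _ ≤ renorm K H m + renorm K H n := add_le_add
      (le_ciSup (bddAbove_range_norm_algebraMap_smul_div K H m) c)
      (le_ciSup (bddAbove_range_norm_algebraMap_smul_div K H n) c)

theorem renorm_algebraMap_smul_le (c : K) (m : M) :
    renorm K H (algebraMap K H c • m) ≤ ‖c‖ * renorm K H m := by
  obtain rfl | hc := eq_or_ne c 0
  · simp [renorm_zero]
  refine ciSup_le fun d ↦ ?_
  -- `d • c • m = (d * c) • m` is one of the terms defining `renorm K H m`
  have h := le_ciSup (bddAbove_range_norm_algebraMap_smul_div K H m) (d * Units.mk0 c hc)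
  simp only [Units.val_mul, Units.val_mk0, map_mul, mul_smul, norm_mul] at h
  rw [div_le_iff₀ (by simpa using hc)] at h
  rw [div_le_iff₀ (norm_pos_iff.2 d.ne_zero)]
  exact h.trans_eq (by unfold renorm; ring)

noncomputable instance : NormedAddCommGroup (RenormedRestrictScalars K H M) :=
  AddGroupNorm.toNormedAddCommGroup
    { toFun := renorm K H (M := M)
      map_zero' := renorm_zero (M := M)
      add_le' := renorm_add_le (M := M)
      neg' := renorm_neg (M := M)
      eq_zero_of_map_eq_zero' := fun m hm ↦ norm_le_zero_iff.1 <|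
        (norm_le_renorm (K := K) (H := H) (M := M) m).trans hm.le }

theorem norm_of (m : M) : ‖of K H m‖ = renorm K H m := rfl

noncomputable instance : NormedSpace K (RenormedRestrictScalars K H M) :=
  ⟨renorm_algebraMap_smul_le (H := H) (M := M)⟩

instance [CompleteSpace M] : CompleteSpace (RenormedRestrictScalars K H M) :=
  let e : M ≃ᵤ RenormedRestrictScalars K H M :=
    { toEquiv := (of K H).toEquiv
      uniformContinuous_toFun :=
        AddMonoidHomClass.uniformContinuous_of_bound (of K H) _ renorm_le
      uniformContinuous_invFun :=
        AddMonoidHomClass.uniformContinuous_of_bound (of K H).symm 1 fun m ↦ by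
          rw [one_mul]; exact norm_le_renorm (M := M) m }
  e.completeSpace_iff.1 ‹_›

end RenormedRestrictScalars

section OpenMapping

variable {H M ι : Type*} [NormedRing H] [NormedAddCommGroup M] [Module H M] [IsBoundedSMul H M]
  [Fintype ι]

theorem norm_linearCombination_le (f : ι → M) (c : ι → H) :
    ‖Fintype.linearCombination H f c‖ ≤ (∑ i, ‖f i‖) * ‖c‖ := by
  rw [Fintype.linearCombination_apply, Finset.sum_mul]
  refine (norm_sum_le _ _).trans <| Finset.sum_le_sum fun i _ ↦ ?_
  calc ‖c i • f i‖ ≤ ‖c i‖ * ‖f i‖ := norm_smul_le _ _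
    _ ≤ ‖f i‖ * ‖c‖ := by rw [mul_comm]; gcongr; exact norm_le_pi_norm c i

open RenormedRestrictScalars in
theorem exists_linearCombination_eq_and_norm_le (K : Type*) [NontriviallyNormedField K]
    [NormedAlgebra K H] [CompleteSpace H] [CompleteSpace M] {f : ι → M}
    (hf : span H (range f) = ⊤) :
    ∃ C > 0, ∀ m, ∃ c : ι → H, Fintype.linearCombination H f c = m ∧ ‖c‖ ≤ C * ‖m‖ := by
  let φ : (ι → H) →L[K] RenormedRestrictScalars K H M :=
    LinearMap.mkContinuous
      { toFun := fun c ↦ of K H (Fintype.linearCombination H f c)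
        map_add' := by simp
        map_smul' := fun a c ↦ by rw [← algebraMap_smul H a c, map_smul]; rfl }
      (‖(1 : H)‖ * ∑ i, ‖f i‖) fun c ↦ (norm_of _).trans_le <| (renorm_le _).trans <| by
        rw [mul_assoc]; gcongr; exact norm_linearCombination_le f c
  have hφ : Function.Surjective φ := (of K H).surjective.comp <|
    (span_range_eq_top_iff_surjective_fintypeLinearCombination H f).1 hf
  obtain ⟨C, hC, hpre⟩ := φ.exists_preimage_norm_le hφ
  refine ⟨C * (‖(1 : H)‖ + 1), by positivity, fun m ↦ ?_⟩
  obtain ⟨c, hc, hc_le⟩ := hpre (of K H m)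
  refine ⟨c, (of K H).injective hc, hc_le.trans ?_⟩
  calc C * ‖of K H m‖ ≤ C * (‖(1 : H)‖ * ‖m‖) := by rw [norm_of]; gcongr; exact renorm_le m
    _ ≤ C * (‖(1 : H)‖ + 1) * ‖m‖ := by rw [← mul_assoc]; gcongr; linarith

end OpenMapping

open Matrix
open scoped Matrix.Norms.Operator

section LinearCombination

variable {R M ι : Type*} [Ring R] [AddCommGroup M] [Module R M] [Fintype ι]

theorem Fintype.linearCombination_linearCombination (v : ι → M) (A : Matrix ι ι R) (b : ι → R) :
    Fintype.linearCombination R (fun i ↦ Fintype.linearCombination R v (A i)) b =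
      Fintype.linearCombination R v (b ᵥ* A) := by
  simp only [Fintype.linearCombination_apply, vecMul, dotProduct, Finset.smul_sum,
    Finset.sum_smul, mul_smul]
  exact Finset.sum_comm

theorem Fintype.linearCombination_one_apply [DecidableEq ι] (v : ι → M) (i : ι) :
    Fintype.linearCombination R v ((1 : Matrix ι ι R) i) = v i := by
  rw [show (1 : Matrix ι ι R) i = Pi.single i 1 from funext fun _ ↦ one_eq_pi_single,
    Fintype.linearCombination_apply_single, one_smul]

theorem span_range_linearCombination_eq [DecidableEq ι] (v : ι → M) {A : Matrix ι ι R}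
    (hA : IsUnit A) :
    span R (range fun i ↦ Fintype.linearCombination R v (A i)) = span R (range v) := by
  obtain ⟨B, hBA⟩ := hA.exists_left_inv
  refine le_antisymm (span_le.2 <| range_subset_iff.2 fun i ↦ ?_)
    (span_le.2 <| range_subset_iff.2 fun i ↦ ?_) <;> rw [← Fintype.range_linearCombination]
  · exact LinearMap.mem_range_self _ _
  · refine ⟨B i, ?_⟩
    rw [Fintype.linearCombination_linearCombination, ← mul_apply_eq_vecMul, hBA,
      Fintype.linearCombination_one_apply]

end LinearCombination

section Perturbation

variable {R M ι : Type*} [NormedRing R] [Fintype ι]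

theorem Matrix.linfty_opNorm_le_card_mul {A : Matrix ι ι R} {r : ℝ} (hr : 0 ≤ r)
    (hA : ∀ i j, ‖A i j‖ ≤ r) : ‖A‖ ≤ Fintype.card ι * r := by
  lift r to NNReal using hr
  rw [linfty_opNorm_def]
  norm_cast
  refine Finset.sup_le fun i _ ↦ ?_
  simpa using Finset.sum_le_card_nsmul Finset.univ (fun j ↦ ‖A i j‖₊) r fun j _ ↦ hA i j

variable [SeminormedAddCommGroup M] [Module R M]

theorem span_range_eq_top_of_norm_sub_lt [CompleteSpace R] [DecidableEq ι] {f f' : ι → M}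
    {C : ℝ} (hC : 0 < C)
    (hf : ∀ m, ∃ c : ι → R, Fintype.linearCombination R f c = m ∧ ‖c‖ ≤ C * ‖m‖)
    (hf' : ∀ i, ‖f i - f' i‖ < (C * (Fintype.card ι + 1))⁻¹) :
    span R (range f') = ⊤ := by
  choose G hG hG_le using fun i ↦ hf (f i - f' i)
  have hG_entry : ∀ i j, ‖of G i j‖ ≤ (Fintype.card ι + 1 : ℝ)⁻¹ := fun i j ↦ calc
    ‖G i j‖ ≤ C * ‖f i - f' i‖ := (norm_le_pi_norm (G i) j).trans (hG_le i)
    _ ≤ C * (C * (Fintype.card ι + 1))⁻¹ := by gcongr; exact (hf' i).le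
    _ = (Fintype.card ι + 1 : ℝ)⁻¹ := by field_simp
  have hG_norm : ‖of G‖ < 1 := calc
    ‖of G‖ ≤ Fintype.card ι * (Fintype.card ι + 1 : ℝ)⁻¹ :=
      linfty_opNorm_le_card_mul (by positivity) hG_entry
    _ < 1 := by rw [← div_eq_mul_inv, div_lt_one (by positivity)]; linarith
  have hf'_eq : f' = fun i ↦ Fintype.linearCombination R f ((1 - of G) i) := by
    funext i
    change f' i = Fintype.linearCombination R f ((1 : Matrix ι ι R) i - G i)
    rw [map_sub, Fintype.linearCombination_one_apply, hG, sub_sub_cancel]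
  -- the `linfty` operator norm induces the product uniformity, so the matrix ring is complete
  have : HasSummableGeomSeries (Matrix ι ι R) :=
    @instHasSummableGeomSeriesOfCompleteSpace _ _ (inferInstanceAs (CompleteSpace (ι → ι → R)))
  rw [hf'_eq, span_range_linearCombination_eq f (isUnit_one_sub_of_norm_lt_one hG_norm),
    span_range_eq_top_iff_surjective_fintypeLinearCombination]
  exact fun m ↦ (hf m).imp fun _ ↦ And.left

end Perturbation

theorem span_eq_top_of_small_perturbation_general
    (K : Type*) [NontriviallyNormedField K]
    (H : Type*) [NormedRing H] [NormedAlgebra K H] [CompleteSpace H]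
    (M : Type*) [NormedAddCommGroup M] [CompleteSpace M]
    [Module H M] (hcompat : ∀ (h : H) (m : M), ‖h • m‖ ≤ ‖h‖ * ‖m‖)
    (k : ℕ) (f : Fin k → M) (hgen : Submodule.span H (Set.range f) = ⊤) :
    ∃ ε > (0 : ℝ), ∀ f' : Fin k → M, (∀ i, ‖f i - f' i‖ < ε) →
      Submodule.span H (Set.range f') = ⊤ := by
  have : IsBoundedSMul H M := .of_norm_smul_le hcompat
  obtain ⟨C, hC, hf⟩ := exists_linearCombination_eq_and_norm_le K hgen
  exact ⟨(C * (k + 1))⁻¹, by positivity, fun f' hf' ↦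
    span_range_eq_top_of_norm_sub_lt hC hf (by simpa only [Fintype.card_fin] using hf')⟩

/-- **Perturbation of generating sets of Banach modules.**  Let `K` be a complete field with
a nontrivial nonarchimedean absolute value, `H` a unital (not necessarily commutative)
Banach `K`-algebra, and `M` a Banach `K`-space with a left `H`-module structure satisfying
`‖h • m‖ ≤ ‖h‖·‖m‖`.  If `M` is generated as a left `H`-module by `f 0, …, f (k-1)`, then
there is `ε > 0` such that any tuple `f'` with `‖f i − f' i‖ < ε` for every `i` also
generates `M` as a left `H`-module. -/
theorem span_eq_top_of_small_perturbation
    (K : Type*) [NontriviallyNormedField K] [CompleteSpace K] [IsUltrametricDist K]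
    (H : Type*) [NormedRing H] [NormedAlgebra K H] [CompleteSpace H]
    (M : Type*) [NormedAddCommGroup M] [NormedSpace K M] [CompleteSpace M]
    [Module H M] (hcompat : ∀ (h : H) (m : M), ‖h • m‖ ≤ ‖h‖ * ‖m‖)
    (k : ℕ) (f : Fin k → M) (hgen : Submodule.span H (Set.range f) = ⊤) :
    ∃ ε > (0 : ℝ), ∀ f' : Fin k → M, (∀ i, ‖f i - f' i‖ < ε) →
      Submodule.span H (Set.range f') = ⊤ :=
  span_eq_top_of_small_perturbation_general K H M hcompat k f hgen
end

section
/- Fix 1 ≤ α ≤ n and tuples s ≤ r of positive reals with r_α < 1. Let s*, r* be the tuples obtained from s, r by replacing the α-th entries by s_α/p and r_α/p. Then there is a unique continuous ℚ_p-algebra homomorphism φ_α : Π_{[s,r]} → Π_{[s*,r*]} with φ_α(T_α) = (1+T_α)^p − 1 and φ_α(T_β) = T_β for β ≠ α, and φ_α is isometric: ‖φ_α(F)‖_{[s*,r*]} = ‖F‖_{[s,r]} for all F ∈ Π_{[s,r]}. -/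
open scoped BigOperators

/-- The variable `T_α` of the Laurent polynomial ring. -/
noncomputable def Tvar (p : ℕ) [Fact p.Prime] {n : ℕ} (α : Fin n) :
    AddMonoidAlgebra ℚ_[p] (Fin n → ℤ) :=
  AddMonoidAlgebra.single (Pi.single α (1 : ℤ)) 1

/-!
Write `(1 + T_α)^p - 1 = T_α^p (1 + w)` with `w = ∑_{0<k<p} C(p,k) T_α^{k-p}`. All these binomial
coefficients are divisible by `p`, and this makes `‖w‖ < 1` in `Π_{[s*,r*]}` once `s_α, r_α < 1`;
so `V = 1 + w` is a unit and every integer power of `V` lies at distance `< 1` from `1`.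
Put `φ_α(T^m) = T^{σ m} V^{m_α}`, where `σ` multiplies the `α`-th exponent by `p`: the monomial
`T^{σ m}` has the same `[s*,r*]`-norm as `T^m` has `[s,r]`-norm, and by the ultrametric inequality
the factors `V^{m_α}` move a sum by strictly less than its norm. Hence `φ_α` is isometric on
Laurent polynomials and extends uniquely to the completion, where continuous algebra maps are
determined by the images of the variables.
-/

section GaussWeight

variable {p n : ℕ} {c : Fin n → ℤ}

lemma gaussWeight_nonneg (t : Fin n → ℝ) (m : Fin n → ℤ) : 0 ≤ gaussWeight p t m :=
  Real.rpow_nonneg (Nat.cast_nonneg p) _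

lemma gaussWeight_zero (t : Fin n → ℝ) : gaussWeight p t 0 = 1 := by
  simp [gaussWeight]

lemma gaussWeight_mul {t t' : Fin n → ℝ} (h : ∀ β, t' β * c β = t β) (m : Fin n → ℤ) :
    gaussWeight p t' (c * m) = gaussWeight p t m := by
  simp only [gaussWeight, Pi.mul_apply, Int.cast_mul, ← mul_assoc, h]

lemma gaussWeight_single (t : Fin n → ℝ) (α : Fin n) (z : ℤ) :
    gaussWeight p t (Pi.single α z) = (p : ℝ) ^ (-(t α * z) / ((p : ℝ) - 1)) := by
  simp [gaussWeight, Pi.single_apply]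

end GaussWeight

section GaussNorm

variable {p : ℕ} [Fact p.Prime] {n : ℕ}

lemma bddAbove_range_norm_coeff_mul_gaussWeight (t : Fin n → ℝ)
    (f : AddMonoidAlgebra ℚ_[p] (Fin n → ℤ)) :
    BddAbove (Set.range fun m => ‖f.coeff m‖ * gaussWeight p t m) := by
  refine ((f.coeff.support.image fun m => ‖f.coeff m‖ * gaussWeight p t m).bddAbove.insert
    0).mono ?_
  rintro _ ⟨m, rfl⟩
  by_cases hm : f.coeff m = 0
  · simp [hm]
  · exact Set.mem_insert_of_mem _ (Finset.mem_coe.mpr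
      (Finset.mem_image_of_mem _ (Finsupp.mem_support_iff.mpr hm)))

lemma le_gaussNorm (t : Fin n → ℝ) (f : AddMonoidAlgebra ℚ_[p] (Fin n → ℤ)) (m : Fin n → ℤ) :
    ‖f.coeff m‖ * gaussWeight p t m ≤ gaussNorm p t f :=
  le_ciSup (bddAbove_range_norm_coeff_mul_gaussWeight t f) m

lemma gaussNorm_le {t : Fin n → ℝ} {f : AddMonoidAlgebra ℚ_[p] (Fin n → ℤ)} {B : ℝ}
    (h : ∀ m, ‖f.coeff m‖ * gaussWeight p t m ≤ B) : gaussNorm p t f ≤ B :=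
  ciSup_le h

lemma gaussNorm_nonneg (t : Fin n → ℝ) (f : AddMonoidAlgebra ℚ_[p] (Fin n → ℤ)) :
    0 ≤ gaussNorm p t f :=
  (mul_nonneg (norm_nonneg _) (gaussWeight_nonneg t 0)).trans (le_gaussNorm t f 0)

lemma gaussNorm_single (t : Fin n → ℝ) (m : Fin n → ℤ) (a : ℚ_[p]) :
    gaussNorm p t (AddMonoidAlgebra.single m a) = ‖a‖ * gaussWeight p t m := by
  classical
  refine le_antisymm (gaussNorm_le fun m' => ?_) (by simpa using le_gaussNorm t (.single m a) m)
  rcases eq_or_ne m m' with rfl | h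
  · simp
  · simpa [Finsupp.single_eq_of_ne' h] using
      mul_nonneg (norm_nonneg a) (gaussWeight_nonneg t m)

lemma isNonarchimedean_gaussNorm (t : Fin n → ℝ) : IsNonarchimedean (gaussNorm p t) := by
  intro f g
  refine gaussNorm_le fun m => ?_
  calc ‖(f + g).coeff m‖ * gaussWeight p t m
      ≤ max ‖f.coeff m‖ ‖g.coeff m‖ * gaussWeight p t m := by
        gcongr
        · exact gaussWeight_nonneg t m
        · exact Padic.nonarchimedean _ _
    _ = max (‖f.coeff m‖ * gaussWeight p t m) (‖g.coeff m‖ * gaussWeight p t m) :=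
        max_mul_of_nonneg _ _ (gaussWeight_nonneg t m)
    _ ≤ max (gaussNorm p t f) (gaussNorm p t g) :=
        max_le_max (le_gaussNorm t f m) (le_gaussNorm t g m)

lemma gaussNorm_le_intervalGaussNorm (s r : Fin n → ℝ) (f : AddMonoidAlgebra ℚ_[p] (Fin n → ℤ))
    (c : Fin n → Bool) : gaussNorm p (corner s r c) f ≤ intervalGaussNorm p s r f :=
  le_ciSup (Set.finite_range fun c => gaussNorm p (corner s r c) f).bddAbove c

lemma intervalGaussNorm_le {s r : Fin n → ℝ} {f : AddMonoidAlgebra ℚ_[p] (Fin n → ℤ)} {B : ℝ}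
    (h : ∀ c, gaussNorm p (corner s r c) f ≤ B) : intervalGaussNorm p s r f ≤ B :=
  ciSup_le h

lemma intervalGaussNorm_lt {s r : Fin n → ℝ} {f : AddMonoidAlgebra ℚ_[p] (Fin n → ℤ)} {B : ℝ}
    (h : ∀ c, gaussNorm p (corner s r c) f < B) : intervalGaussNorm p s r f < B := by
  obtain ⟨c, hc⟩ := exists_eq_ciSup_of_finite (f := fun c => gaussNorm p (corner s r c) f)
  rw [intervalGaussNorm, ← hc]
  exact h c

lemma isNonarchimedean_intervalGaussNorm (s r : Fin n → ℝ) :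
    IsNonarchimedean (intervalGaussNorm p s r) := fun f g =>
  intervalGaussNorm_le fun c => (isNonarchimedean_gaussNorm _ f g).trans
    (max_le_max (gaussNorm_le_intervalGaussNorm s r f c) (gaussNorm_le_intervalGaussNorm s r g c))

lemma intervalGaussNorm_one (s r : Fin n → ℝ) :
    intervalGaussNorm p s r (1 : AddMonoidAlgebra ℚ_[p] (Fin n → ℤ)) = 1 := by
  simp [intervalGaussNorm, AddMonoidAlgebra.one_def, gaussNorm_single, gaussWeight_zero]

lemma intervalGaussNorm_single_coeff_le (s r : Fin n → ℝ) (f : AddMonoidAlgebra ℚ_[p] (Fin n → ℤ))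
    (m : Fin n → ℤ) :
    intervalGaussNorm p s r (.single m (f.coeff m)) ≤ intervalGaussNorm p s r f :=
  intervalGaussNorm_le fun c => (gaussNorm_single _ m _).trans_le
    ((le_gaussNorm _ f m).trans (gaussNorm_le_intervalGaussNorm s r f c))

variable {c : Fin n → ℤ}

lemma gaussNorm_mapDomain_mul (hc : ∀ β, c β ≠ 0) {t t' : Fin n → ℝ}
    (h : ∀ β, t' β * c β = t β) (f : AddMonoidAlgebra ℚ_[p] (Fin n → ℤ)) :
    gaussNorm p t' (AddMonoidAlgebra.mapDomain (c * ·) f) = gaussNorm p t f := by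
  have hinj : Function.Injective (c * ·) := fun m m' hm =>
    funext fun β => mul_left_cancel₀ (hc β) (congrFun hm β)
  refine le_antisymm (gaussNorm_le fun m' => ?_) (gaussNorm_le fun m => ?_)
  · by_cases hm' : m' ∈ Set.range (c * ·)
    · obtain ⟨m, rfl⟩ := hm'
      rw [AddMonoidAlgebra.coeff_mapDomain, Finsupp.mapDomain_apply hinj, gaussWeight_mul h]
      exact le_gaussNorm t f m
    · rw [AddMonoidAlgebra.coeff_mapDomain, Finsupp.mapDomain_of_notMem_range _ _ hm', norm_zero,
        zero_mul]
      exact gaussNorm_nonneg t f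
  · simpa [Finsupp.mapDomain_apply hinj, gaussWeight_mul h] using
      le_gaussNorm t' (AddMonoidAlgebra.mapDomain (c * ·) f) (c * m)

lemma intervalGaussNorm_mapDomain_mul (hc : ∀ β, c β ≠ 0) {s r s' r' : Fin n → ℝ}
    (hs : ∀ β, s' β * c β = s β) (hr : ∀ β, r' β * c β = r β)
    (f : AddMonoidAlgebra ℚ_[p] (Fin n → ℤ)) :
    intervalGaussNorm p s' r' (AddMonoidAlgebra.mapDomain (c * ·) f) =
      intervalGaussNorm p s r f :=
  iSup_congr fun b => gaussNorm_mapDomain_mul hc (fun β => by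
    unfold corner
    split_ifs
    exacts [hr β, hs β]) f

end GaussNorm

section Ultrametric

variable {R : Type*}

lemma norm_add_eq_left_of_norm_le_mul [SeminormedAddCommGroup R] [IsUltrametricDist R]
    {x e : R} {c : ℝ} (hc : c < 1) (h : ‖e‖ ≤ c * ‖x‖) : ‖x + e‖ = ‖x‖ := by
  rcases (norm_nonneg x).eq_or_lt with hx | hx
  · rw [← hx, mul_zero] at h
    refine le_antisymm ?_ (hx ▸ norm_nonneg _)
    exact (IsUltrametricDist.norm_add_le_max x e).trans (max_le le_rfl (h.trans hx.le))
  · have he : ‖e‖ < ‖x‖ := h.trans_lt (mul_lt_of_lt_one_left hx hc)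
    rw [IsUltrametricDist.norm_add_eq_max_of_norm_ne_norm he.ne', max_eq_left he.le]

variable [SeminormedRing R] [IsUltrametricDist R]

lemma norm_sum_mul_eq_norm_sum {ι : Type*} {s : Finset ι} {x u : ι → R}
    (hu : ∀ i ∈ s, ‖u i - 1‖ < 1) (hx : ∀ i ∈ s, ‖x i‖ ≤ ‖∑ j ∈ s, x j‖) :
    ‖∑ i ∈ s, x i * u i‖ = ‖∑ i ∈ s, x i‖ := by
  rcases s.eq_empty_or_nonempty with rfl | hs
  · simp
  obtain ⟨i, hi, hle⟩ :=
    IsUltrametricDist.exists_norm_finsetSum_le_of_nonempty hs fun i => x i * (u i - 1)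
  have hsplit : ∑ i ∈ s, x i * u i = ∑ i ∈ s, x i + ∑ i ∈ s, x i * (u i - 1) := by
    simp [mul_sub]
  rw [hsplit]
  refine norm_add_eq_left_of_norm_le_mul (hu i hi) ?_
  calc ‖∑ i ∈ s, x i * (u i - 1)‖ ≤ ‖x i‖ * ‖u i - 1‖ := hle.trans (norm_mul_le _ _)
    _ ≤ ‖∑ j ∈ s, x j‖ * ‖u i - 1‖ := by gcongr; exact hx i hi
    _ = ‖u i - 1‖ * ‖∑ j ∈ s, x j‖ := mul_comm _ _

variable [NormOneClass R]

lemma norm_le_one_of_norm_sub_one_lt_one {u : R} (hu : ‖u - 1‖ < 1) : ‖u‖ ≤ 1 := by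
  simpa using (IsUltrametricDist.norm_add_le_max (u - 1) 1).trans (max_le hu.le norm_one.le)

variable (R) in
def principalUnits : Subgroup Rˣ where
  carrier := {u | ‖(u : R) - 1‖ < 1}
  one_mem' := by simp
  mul_mem' {u v} hu hv := by
    have huv : ((u * v : Rˣ) : R) - 1 = u * (v - 1) + (u - 1) := by
      simp only [Units.val_mul]; noncomm_ring
    change ‖(u : R) - 1‖ < 1 at hu
    change ‖(v : R) - 1‖ < 1 at hv
    change ‖((u * v : Rˣ) : R) - 1‖ < 1
    rw [huv]
    refine (IsUltrametricDist.norm_add_le_max _ _).trans_lt (max_lt ?_ hu)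
    calc ‖(u : R) * (v - 1)‖ ≤ ‖(u : R)‖ * ‖(v : R) - 1‖ := norm_mul_le _ _
      _ ≤ 1 * ‖(v : R) - 1‖ := by gcongr; exact norm_le_one_of_norm_sub_one_lt_one hu
      _ < 1 := by rwa [one_mul]
  inv_mem' {u} hu := by
    change ‖(u : R) - 1‖ < 1 at hu
    change ‖((u⁻¹ : Rˣ) : R) - 1‖ < 1
    set x : R := ((u⁻¹ : Rˣ) : R)
    have hx : 1 - x = (u - 1) * x := by rw [sub_mul, Units.mul_inv, one_mul]
    have hxu : ‖(u - 1 : R) * x‖ ≤ ‖(u : R) - 1‖ * ‖x‖ := norm_mul_le _ _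
    have hx1 : ‖x‖ ≤ 1 := by
      by_contra! hx1
      have : ‖x‖ ≤ max 1 (‖(u : R) - 1‖ * ‖x‖) := by
        have hx' : x = 1 + -((u - 1) * x) := by rw [← hx]; abel
        calc ‖x‖ ≤ max ‖(1 : R)‖ ‖-((u - 1 : R) * x)‖ :=
              (congrArg norm hx').trans_le (IsUltrametricDist.norm_add_le_max _ _)
          _ ≤ max 1 (‖(u : R) - 1‖ * ‖x‖) := by rw [norm_one, norm_neg]; gcongr
      exact this.not_gt (max_lt hx1 (mul_lt_of_lt_one_left (one_pos.trans hx1) hu))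
    rw [← norm_neg, neg_sub, hx]
    exact hxu.trans_lt ((mul_le_of_le_one_right (norm_nonneg _) hx1).trans_lt hu)

end Ultrametric

section Extension

variable {R A B C : Type*} [CommSemiring R] [Ring A] [Algebra R A] [SeminormedRing B]
  [Algebra R B] [NormedRing C] [CompleteSpace C] [Algebra R C]

lemma exists_algHom_extension_of_norm_eq (i : A →ₐ[R] B) (hi : DenseRange i) (ψ : A →ₐ[R] C)
    (hψ : ∀ a, ‖ψ a‖ = ‖i a‖) :
    ∃ Φ : B →ₐ[R] C, (∀ a, Φ (i a) = ψ a) ∧ ∀ x, ‖Φ x‖ = ‖x‖ := by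
  let : SeminormedRing A := SeminormedRing.induced A B i
  have hi_iso : Isometry i := AddMonoidHomClass.isometry_of_norm i fun _ => rfl
  have hψ_iso : Isometry ψ := AddMonoidHomClass.isometry_of_norm ψ hψ
  have ue : IsUniformInducing (i : A →+* B) := hi_iso.isUniformInducing
  have huc : UniformContinuous (ψ : A →+* C) := hψ_iso.uniformContinuous
  let Φ := IsDenseInducing.extendRingHom ue hi huc
  have hΦ : ∀ a, Φ (i a) = ψ a := (ue.isDenseInducing hi).extend_eq huc.continuous
  have hΦc : Continuous Φ := (uniformContinuous_uniformly_extend ue hi huc).continuous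
  refine ⟨{ Φ with commutes' := fun r => by simpa using hΦ (algebraMap R A r) }, hΦ, fun x => ?_⟩
  exact hi.induction_on x (isClosed_eq hΦc.norm continuous_norm) fun a => by
    simpa [hΦ] using hψ a

end Extension

section LaurentExt

variable {n : ℕ}

lemma closure_range_ofAdd_single :
    Subgroup.closure (Set.range fun β : Fin n => Multiplicative.ofAdd (Pi.single β (1 : ℤ))) =
      ⊤ := by
  refine eq_top_iff.mpr fun m _ => ?_
  rw [← ofAdd_toAdd m, ← Finset.univ_sum_single (Multiplicative.toAdd m), ofAdd_sum]
  refine Subgroup.prod_mem _ fun β _ => ?_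
  rw [← mul_one (Multiplicative.toAdd m β), ← smul_eq_mul, Pi.single_smul', ofAdd_zsmul]
  exact Subgroup.zpow_mem _ (Subgroup.subset_closure (Set.mem_range_self β)) _

lemma laurent_algHom_ext {k S : Type*} [CommSemiring k] [Semiring S] [Algebra k S]
    {f g : AddMonoidAlgebra k (Fin n → ℤ) →ₐ[k] S}
    (h : ∀ β, f (.single (Pi.single β 1) 1) = g (.single (Pi.single β 1) 1)) : f = g := by
  have hof : (f : AddMonoidAlgebra k (Fin n → ℤ) →* S).comp (AddMonoidAlgebra.of k _) =
      (g : AddMonoidAlgebra k (Fin n → ℤ) →* S).comp (AddMonoidAlgebra.of k _) :=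
    MonoidHom.eq_of_eqOn_dense closure_range_ofAdd_single (by rintro _ ⟨β, rfl⟩; exact h β)
  exact AddMonoidAlgebra.algHom_ext' hof (Subsingleton.elim _ _)

end LaurentExt

section Completion

variable {p : ℕ} [Fact p.Prime] {n : ℕ} {s r : Fin n → ℝ}

instance (C : GaussCompletion p n (intervalGaussNorm p s r)) : IsUltrametricDist C.carrier :=
  IsUltrametricDist.isUltrametricDist_of_forall_norm_add_le_max_norm fun x y =>
    C.denseRange.induction_on₂ (p := fun x y => ‖x + y‖ ≤ max ‖x‖ ‖y‖)
      (isClosed_le (by fun_prop) (by fun_prop))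
      (fun f g => by
        simpa only [← map_add, C.isometric] using isNonarchimedean_intervalGaussNorm s r f g) x y

instance (C : GaussCompletion p n (intervalGaussNorm p s r)) : NormOneClass C.carrier :=
  ⟨by rw [← map_one C.emb, C.isometric, intervalGaussNorm_one]⟩

lemma GaussCompletion.algHom_ext {N : AddMonoidAlgebra ℚ_[p] (Fin n → ℤ) → ℝ}
    {C : GaussCompletion p n N} {S : Type*} [TopologicalSpace S] [T2Space S] [Semiring S]
    [Algebra ℚ_[p] S] {Φ Ψ : C.carrier →ₐ[ℚ_[p]] S} (hΦ : Continuous Φ) (hΨ : Continuous Ψ)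
    (h : ∀ β, Φ (C.emb (Tvar p β)) = Ψ (C.emb (Tvar p β))) : Φ = Ψ := by
  have hcomp : Φ.comp C.emb = Ψ.comp C.emb := laurent_algHom_ext h
  exact DFunLike.coe_injective (C.denseRange.equalizer hΦ hΨ (congrArg DFunLike.coe hcomp))

end Completion

section Cofactor

variable {p : ℕ} [hp : Fact p.Prime] {n : ℕ}

lemma Padic.norm_natCast_choose_le_inv {k : ℕ} (hk : k ≠ 0) (hkp : k < p) :
    ‖(p.choose k : ℚ_[p])‖ ≤ (p : ℝ)⁻¹ := by
  have hdvd : ((p ^ 1 : ℕ) : ℤ) ∣ (p.choose k : ℤ) := by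
    rw [pow_one]; exact_mod_cast hp.out.dvd_choose_self hk hkp
  simpa using (Padic.norm_int_le_pow_iff_dvd (p := p) (p.choose k) 1).mpr (by exact_mod_cast hdvd)

variable (p) (α : Fin n)

noncomputable def frobeniusCofactor : AddMonoidAlgebra ℚ_[p] (Fin n → ℤ) :=
  ∑ k ∈ Finset.Ico 1 p, .single (Pi.single α ((k : ℤ) - p)) (p.choose k : ℚ_[p])

lemma Tvar_pow (k : ℕ) : Tvar p α ^ k = .single (Pi.single α (k : ℤ)) 1 := by
  rw [Tvar, AddMonoidAlgebra.single_pow, one_pow, ← Pi.single_smul', nsmul_eq_mul, mul_one]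

lemma one_add_Tvar_pow_sub_one :
    (1 + Tvar p α) ^ p - 1 =
      .single (Pi.single α (p : ℤ)) 1 * (1 + frobeniusCofactor p α) := by
  have hterm : ∀ k, Tvar p α ^ k * (p.choose k : AddMonoidAlgebra ℚ_[p] (Fin n → ℤ)) =
      .single (Pi.single α (k : ℤ)) (p.choose k : ℚ_[p]) := fun k => by
    rw [Tvar_pow, AddMonoidAlgebra.natCast_def, AddMonoidAlgebra.single_mul_single, add_zero,
      one_mul]
  rw [add_comm, add_pow, Finset.sum_range_succ, Finset.range_eq_Ico,
    Finset.sum_eq_sum_Ico_succ_bot hp.out.pos]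
  simp only [one_pow, mul_one, hterm, frobeniusCofactor, mul_add, Finset.mul_sum,
    AddMonoidAlgebra.single_mul_single, ← Pi.single_add]
  simp only [Nat.choose_self, Nat.choose_zero_right, Nat.cast_one, Nat.cast_zero, Pi.single_zero,
    ← AddMonoidAlgebra.one_def, add_sub_cancel, one_mul]
  abel

variable {p α}

lemma gaussNorm_frobeniusCofactor_lt_one {t : Fin n → ℝ} (ht : p * t α < 1) :
    gaussNorm p t (frobeniusCofactor p α) < 1 := by
  have hp1 : (1 : ℝ) < p := by exact_mod_cast hp.out.one_lt
  obtain ⟨k, hk, hle⟩ := (isNonarchimedean_gaussNorm (p := p) t).finset_image_add_of_nonempty _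
    (Finset.nonempty_Ico.mpr hp.out.one_lt)
  obtain ⟨hk1, hkp⟩ := Finset.mem_Ico.mp hk
  have hk1' : (1 : ℝ) ≤ k := by exact_mod_cast hk1
  have hkp' : (k : ℝ) + 1 ≤ p := by exact_mod_cast hkp
  have hexp : -(t α * ((k : ℤ) - p : ℤ)) / ((p : ℝ) - 1) < 1 := by
    rw [div_lt_one (by linarith)]
    push_cast
    nlinarith [mul_pos (sub_pos.mpr ht) (by linarith : (0 : ℝ) < p - k)]
  refine hle.trans_lt ?_
  rw [gaussNorm_single, gaussWeight_single]
  calc ‖(p.choose k : ℚ_[p])‖ * (p : ℝ) ^ (-(t α * ((k : ℤ) - p : ℤ)) / ((p : ℝ) - 1))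
      < (p : ℝ)⁻¹ * (p : ℝ) ^ (1 : ℝ) :=
        mul_lt_mul' (Padic.norm_natCast_choose_le_inv (by omega) hkp)
          (Real.rpow_lt_rpow_of_exponent_lt hp1 hexp) (by positivity) (by positivity)
    _ = 1 := by rw [Real.rpow_one, inv_mul_cancel₀ (by positivity)]

variable {s r : Fin n → ℝ}

lemma intervalGaussNorm_frobeniusCofactor_lt_one (hs : s α < 1) (hr : r α < 1) :
    intervalGaussNorm p (Function.update s α (s α / p)) (Function.update r α (r α / p))
      (frobeniusCofactor p α) < 1 := by
  have hp0 : (p : ℝ) ≠ 0 := by exact_mod_cast hp.out.ne_zero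
  refine intervalGaussNorm_lt fun b => gaussNorm_frobeniusCofactor_lt_one ?_
  unfold corner
  split_ifs <;> simpa [mul_div_cancel₀ _ hp0]

end Cofactor

section FrobeniusLift

variable (p : ℕ) {n : ℕ} (α : Fin n) {k S : Type*} [CommSemiring k] [CommSemiring S]
  [Algebra k S]

noncomputable def frobeniusLift (e : AddMonoidAlgebra k (Fin n → ℤ) →ₐ[k] S) (V : Sˣ) :
    AddMonoidAlgebra k (Fin n → ℤ) →ₐ[k] S :=
  AddMonoidAlgebra.lift k S (Fin n → ℤ)
    { toFun m := e (.single (Pi.mulSingle α (p : ℤ) * m.toAdd) 1) * ↑(V ^ m.toAdd α)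
      map_one' := by simp [← AddMonoidAlgebra.one_def]
      map_mul' x y := by
        have hsingle : (AddMonoidAlgebra.single (Pi.mulSingle α (p : ℤ) * (x * y).toAdd) 1 :
            AddMonoidAlgebra k (Fin n → ℤ)) =
            .single (Pi.mulSingle α (p : ℤ) * x.toAdd) 1 *
              .single (Pi.mulSingle α (p : ℤ) * y.toAdd) 1 := by
          rw [AddMonoidAlgebra.single_mul_single, one_mul, toAdd_mul, mul_add]
        rw [hsingle, map_mul, toAdd_mul, Pi.add_apply, zpow_add, Units.val_mul]
        ring }

variable {p α}

lemma frobeniusLift_single (e : AddMonoidAlgebra k (Fin n → ℤ) →ₐ[k] S) (V : Sˣ)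
    (m : Fin n → ℤ) (a : k) :
    frobeniusLift p α e V (.single m a) =
      e (.single (Pi.mulSingle α (p : ℤ) * m) a) * ↑(V ^ m α) := by
  rw [frobeniusLift, AddMonoidAlgebra.lift_single, MonoidHom.coe_mk, OneHom.coe_mk,
    ← smul_mul_assoc, ← map_smul, AddMonoidAlgebra.smul_single', mul_one]
  rfl

lemma mulSingle_mul_single_self :
    (Pi.mulSingle α (p : ℤ) : Fin n → ℤ) * Pi.single α 1 = Pi.single α (p : ℤ) := by
  ext γ
  rcases eq_or_ne γ α with rfl | h <;> simp [*]

lemma mulSingle_mul_single_of_ne {β : Fin n} (h : β ≠ α) :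
    (Pi.mulSingle α (p : ℤ) : Fin n → ℤ) * Pi.single β 1 = Pi.single β 1 := by
  ext γ
  rcases eq_or_ne γ α with rfl | hγ <;> simp [*, Pi.single_apply, Ne.symm h]

end FrobeniusLift

section PartialFrobenius

variable {p : ℕ} [hp : Fact p.Prime] {n : ℕ} {α : Fin n}

lemma update_div_mul_mulSingle (t : Fin n → ℝ) (β : Fin n) :
    Function.update t α (t α / p) β * ((Pi.mulSingle α (p : ℤ) : Fin n → ℤ) β : ℝ) = t β := by
  rcases eq_or_ne β α with rfl | h
  · simp [hp.out.ne_zero]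
  · simp [h]

variable {S : Type*} [CommSemiring S] [Algebra ℚ_[p] S]
  (e : AddMonoidAlgebra ℚ_[p] (Fin n → ℤ) →ₐ[ℚ_[p]] S) (V : Sˣ)

lemma frobeniusLift_Tvar_self :
    frobeniusLift p α e V (Tvar p α) = e (.single (Pi.single α (p : ℤ)) 1) * V := by
  rw [Tvar, frobeniusLift_single, mulSingle_mul_single_self, Pi.single_eq_same, zpow_one]

lemma frobeniusLift_Tvar_of_ne {β : Fin n} (h : β ≠ α) :
    frobeniusLift p α e V (Tvar p β) = e (Tvar p β) := by
  rw [Tvar, frobeniusLift_single, mulSingle_mul_single_of_ne h, Pi.single_eq_of_ne' h, zpow_zero,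
    Units.val_one, mul_one]

variable {s r : Fin n → ℝ} (Cstar : GaussCompletion p n
  (intervalGaussNorm p (Function.update s α (s α / p)) (Function.update r α (r α / p))))

lemma norm_frobeniusLift {V : Cstar.carrierˣ} (hV : ‖(V : Cstar.carrier) - 1‖ < 1)
    (f : AddMonoidAlgebra ℚ_[p] (Fin n → ℤ)) :
    ‖frobeniusLift p α Cstar.emb V f‖ = intervalGaussNorm p s r f := by
  set c : Fin n → ℤ := Pi.mulSingle α (p : ℤ)
  have hc : ∀ β, c β ≠ 0 := fun β => by
    rcases eq_or_ne β α with rfl | h <;> simp [c, *, hp.out.ne_zero]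
  have hσ : ∀ g, ‖Cstar.emb (AddMonoidAlgebra.mapDomain (c * ·) g)‖ =
      intervalGaussNorm p s r g := fun g => by
    rw [Cstar.isometric]
    exact intervalGaussNorm_mapDomain_mul hc (update_div_mul_mulSingle s)
      (update_div_mul_mulSingle r) g
  have hX : Cstar.emb (AddMonoidAlgebra.mapDomain (c * ·) f) =
      ∑ m ∈ f.coeff.support, Cstar.emb (.single (c * m) (f.coeff m)) := by
    conv_lhs => rw [← AddMonoidAlgebra.sum_coeff_single f]
    rw [AddMonoidAlgebra.mapDomain_sum, Finsupp.sum, map_sum]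
    simp only [AddMonoidAlgebra.mapDomain_single]
  have hΦ : frobeniusLift p α Cstar.emb V f =
      ∑ m ∈ f.coeff.support, Cstar.emb (.single (c * m) (f.coeff m)) * ↑(V ^ m α) := by
    conv_lhs => rw [← AddMonoidAlgebra.sum_coeff_single f]
    simp [Finsupp.sum, frobeniusLift_single, c]
  rw [hΦ, ← hσ, hX]
  refine norm_sum_mul_eq_norm_sum (fun m _ => (principalUnits _).zpow_mem hV _) fun m _ => ?_
  rw [← hX, hσ, ← AddMonoidAlgebra.mapDomain_single, hσ]
  exact intervalGaussNorm_single_coeff_le s r f m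

end PartialFrobenius

theorem partial_frobenius_on_laurent_completion_general
    (p : ℕ) [Fact p.Prime] (n : ℕ) (α : Fin n) (s r : Fin n → ℝ)
    (hsr : ∀ β, s β ≤ r β) (hrα : r α < 1)
    (C : GaussCompletion p n (intervalGaussNorm p s r))
    (Cstar : GaussCompletion p n
      (intervalGaussNorm p (Function.update s α (s α / p)) (Function.update r α (r α / p)))) :
    (∃! Φ : C.carrier →ₐ[ℚ_[p]] Cstar.carrier, Continuous Φ ∧
      Φ (C.emb (Tvar p α)) = Cstar.emb ((1 + Tvar p α) ^ p - 1) ∧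
      ∀ β, β ≠ α → Φ (C.emb (Tvar p β)) = Cstar.emb (Tvar p β)) ∧
    (∀ Φ : C.carrier →ₐ[ℚ_[p]] Cstar.carrier, Continuous Φ →
      Φ (C.emb (Tvar p α)) = Cstar.emb ((1 + Tvar p α) ^ p - 1) →
      (∀ β, β ≠ α → Φ (C.emb (Tvar p β)) = Cstar.emb (Tvar p β)) →
      ∀ F, ‖Φ F‖ = ‖F‖) := by
  have hw : ‖-Cstar.emb (frobeniusCofactor p α)‖ < 1 := by
    rw [norm_neg, Cstar.isometric]
    exact intervalGaussNorm_frobeniusCofactor_lt_one ((hsr α).trans_lt hrα) hrα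
  set V := Units.oneSub _ hw
  have hV : (V : Cstar.carrier) = Cstar.emb (1 + frobeniusCofactor p α) := by
    rw [Units.val_oneSub, sub_neg_eq_add, map_add, map_one]
  have hV1 : ‖(V : Cstar.carrier) - 1‖ < 1 := by
    rwa [hV, map_add, map_one, add_sub_cancel_left, ← norm_neg]
  obtain ⟨Φ, hΦ, hΦnorm⟩ := exists_algHom_extension_of_norm_eq C.emb C.denseRange
    (frobeniusLift p α Cstar.emb V) fun f => by rw [C.isometric, norm_frobeniusLift Cstar hV1]
  have hΦc : Continuous Φ := (AddMonoidHomClass.isometry_of_norm Φ hΦnorm).continuous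
  have hΦα : Φ (C.emb (Tvar p α)) = Cstar.emb ((1 + Tvar p α) ^ p - 1) := by
    rw [hΦ, frobeniusLift_Tvar_self, hV, ← map_mul, one_add_Tvar_pow_sub_one]
  have hΦβ : ∀ β, β ≠ α → Φ (C.emb (Tvar p β)) = Cstar.emb (Tvar p β) := fun β h => by
    rw [hΦ, frobeniusLift_Tvar_of_ne _ _ h]
  have huniq : ∀ Ψ : C.carrier →ₐ[ℚ_[p]] Cstar.carrier, Continuous Ψ →
      Ψ (C.emb (Tvar p α)) = Cstar.emb ((1 + Tvar p α) ^ p - 1) →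
      (∀ β, β ≠ α → Ψ (C.emb (Tvar p β)) = Cstar.emb (Tvar p β)) → Ψ = Φ :=
    fun Ψ hΨ hΨα hΨβ => GaussCompletion.algHom_ext hΨ hΦc fun β => by
      rcases eq_or_ne β α with rfl | h
      · rw [hΨα, hΦα]
      · rw [hΨβ β h, hΦβ β h]
  refine ⟨⟨Φ, ⟨hΦc, hΦα, hΦβ⟩, fun Ψ hΨ => huniq Ψ hΨ.1 hΨ.2.1 hΨ.2.2⟩, ?_⟩
  intro Ψ hΨ hΨα hΨβ F
  rw [huniq Ψ hΨ hΨα hΨβ, hΦnorm]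

/-- For `0 < s ≤ r` with `r_α < 1`, there is a unique continuous `ℚ_p`-algebra homomorphism
`φ_α : Π_{[s,r]} → Π_{[s*,r*]}` (where `s*`, `r*` replace the `α`-th entries by `s_α/p`,
`r_α/p`) with `φ_α(T_α) = (1+T_α)^p − 1` and `φ_α(T_β) = T_β` for `β ≠ α`; and `φ_α` is
isometric: `‖φ_α(F)‖_{[s*,r*]} = ‖F‖_{[s,r]}` for all `F`. -/
theorem partial_frobenius_on_laurent_completion
    (p : ℕ) [Fact p.Prime] (n : ℕ) (α : Fin n) (s r : Fin n → ℝ)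
    (hs : ∀ β, 0 < s β) (hsr : ∀ β, s β ≤ r β) (hrα : r α < 1)
    (C : GaussCompletion p n (intervalGaussNorm p s r))
    (Cstar : GaussCompletion p n
      (intervalGaussNorm p (Function.update s α (s α / p)) (Function.update r α (r α / p)))) :
    (∃! Φ : C.carrier →ₐ[ℚ_[p]] Cstar.carrier, Continuous Φ ∧
      Φ (C.emb (Tvar p α)) = Cstar.emb ((1 + Tvar p α) ^ p - 1) ∧
      ∀ β, β ≠ α → Φ (C.emb (Tvar p β)) = Cstar.emb (Tvar p β)) ∧
    (∀ Φ : C.carrier →ₐ[ℚ_[p]] Cstar.carrier, Continuous Φ →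
      Φ (C.emb (Tvar p α)) = Cstar.emb ((1 + Tvar p α) ^ p - 1) →
      (∀ β, β ≠ α → Φ (C.emb (Tvar p β)) = Cstar.emb (Tvar p β)) →
      ∀ F, ‖Φ F‖ = ‖F‖) :=
  partial_frobenius_on_laurent_completion_general p n α s r hsr hrα C Cstar
end
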